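/- arXiv:2012.06107 — 5 statements merged into one kernel-verified Lean document; each statement's English description precedes it below -/
import Mathlib

section
/- For every real ν, every x > 0 and every t > 0, the Shu function admits the representation S_ν(x,t) = (1/2) ∫_{ln(x/(2t))}^∞ exp(-x·cosh(w) + ν·w) dw. -/
/-!
The substitution `τ = (x/2) e^{-w}` maps `(log (x/(2t)), ∞)` decreasingly onto `(0, t)`, and turns
`τ^{-(ν+1)} e^{-τ - x²/(4τ)} dτ` into `(x/2)^{-ν} e^{νw} e^{-x cosh w} dw`, since
`τ + x²/(4τ) = (x/2)(e^{-w} + e^{w}) = x cosh w`.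
-/

open Real MeasureTheory Set

/-- The Shu function `S_ν(x,t) = (1/2)(x/2)^ν ∫_0^t τ^{-(ν+1)} e^{-τ - x²/(4τ)} dτ`. -/
noncomputable def shu (ν x t : ℝ) : ℝ :=
  (1/2) * (x/2) ^ ν * ∫ τ in (0:ℝ)..t, τ ^ (-(ν+1)) * Real.exp (-τ - x^2 / (4*τ))

section ExpSubstitution

variable {c : ℝ} (hc : 0 < c)
include hc

lemma image_const_mul_exp_neg_Ioi (a : ℝ) :
    (fun w => c * exp (-w)) '' Ioi a = Ioo 0 (c * exp (-a)) := by
  ext y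
  constructor
  · rintro ⟨w, hw, rfl⟩
    exact ⟨by positivity, mul_lt_mul_of_pos_left (exp_lt_exp.2 (neg_lt_neg hw)) hc⟩
  · rintro ⟨hy0, hy⟩
    refine ⟨log (c / y), ?_, ?_⟩
    · rw [mem_Ioi, ← neg_lt_neg_iff, ← exp_lt_exp, exp_neg, exp_log (by positivity), inv_div,
        div_lt_iff₀ hc, mul_comm]
      exact hy
    · simp only [exp_neg, exp_log (div_pos hc hy0), inv_div]
      field_simp

lemma integral_Ioo_eq_integral_Ioi_const_mul_exp_neg (a : ℝ) (g : ℝ → ℝ) :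
    ∫ τ in Ioo 0 (c * exp (-a)), g τ = ∫ w in Ioi a, c * exp (-w) * g (c * exp (-w)) := by
  have hderiv : ∀ w ∈ Ioi a,
      HasDerivWithinAt (fun w => c * exp (-w)) (-(c * exp (-w))) (Ioi a) w := fun w _ => by
    simpa using (((hasDerivAt_id w).neg).exp.const_mul c).hasDerivWithinAt
  have hinj : InjOn (fun w => c * exp (-w)) (Ioi a) := fun u _ v _ huv => by
    simpa [hc.ne'] using huv
  rw [← image_const_mul_exp_neg_Ioi hc,
    integral_image_eq_integral_abs_deriv_smul measurableSet_Ioi hderiv hinj]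
  simp only [abs_neg, abs_of_pos (mul_pos hc (exp_pos _)), smul_eq_mul]

lemma intervalIntegral_eq_integral_Ioi_const_mul_exp_neg {t : ℝ} (ht : 0 < t) (g : ℝ → ℝ) :
    ∫ τ in (0:ℝ)..t, g τ = ∫ w in Ioi (log (c / t)), c * exp (-w) * g (c * exp (-w)) := by
  have hend : c * exp (-log (c / t)) = t := by
    rw [exp_neg, exp_log (div_pos hc ht), inv_div]
    field_simp
  rw [← integral_Ioo_eq_integral_Ioi_const_mul_exp_neg hc, hend,
    intervalIntegral.integral_of_le ht.le, integral_Ioc_eq_integral_Ioo]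

end ExpSubstitution

lemma shu_integrand_at_half_mul_exp_neg (ν : ℝ) {x : ℝ} (hx : 0 < x) (w : ℝ) :
    (x/2) ^ ν * ((x/2) * exp (-w) *
      (((x/2) * exp (-w)) ^ (-(ν+1)) * exp (-((x/2) * exp (-w)) - x^2 / (4 * ((x/2) * exp (-w))))))
      = exp (-x * cosh w + ν * w) := by
  have hc : 0 < x/2 := by positivity
  have hpow : ((x/2) * exp (-w)) ^ (-(ν+1)) = (x/2) ^ (-(ν+1)) * exp (w * (ν+1)) := by
    rw [mul_rpow hc.le (exp_pos _).le, ← exp_mul]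
    ring_nf
  have hcosh : -((x/2) * exp (-w)) - x^2 / (4 * ((x/2) * exp (-w))) = -x * cosh w := by
    rw [cosh_eq, exp_neg]
    field_simp
    ring
  have hscale : (x/2) ^ ν * (x/2) ^ (-(ν+1)) * (x/2) = 1 := by
    rw [← rpow_add hc, show ν + -(ν+1) = -1 by ring, rpow_neg_one, inv_mul_cancel₀ hc.ne']
  rw [hpow, hcosh]
  calc (x/2) ^ ν * ((x/2) * exp (-w) * ((x/2) ^ (-(ν+1)) * exp (w * (ν+1)) * exp (-x * cosh w)))
      = ((x/2) ^ ν * (x/2) ^ (-(ν+1)) * (x/2)) * (exp (-w) * exp (w * (ν+1)) * exp (-x * cosh w)) := by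
        ring
    _ = exp (-x * cosh w + ν * w) := by
        rw [hscale, one_mul, ← exp_add, ← exp_add]
        ring_nf

theorem stmt_0 (ν x t : ℝ) (hx : 0 < x) (ht : 0 < t) :
    shu ν x t =
      (1/2) * ∫ w in Set.Ioi (Real.log (x / (2*t))),
        Real.exp (-x * Real.cosh w + ν * w) := by
  rw [shu, intervalIntegral_eq_integral_Ioi_const_mul_exp_neg (by positivity : 0 < x/2) ht,
    div_div, mul_assoc, ← integral_const_mul]
  simp only [shu_integrand_at_half_mul_exp_neg ν hx]
end

section
/- For every real ν, every x > 0 and every t > 0, the Shu function satisfies the first recurrence relation -(2ν/x)·S_ν(x,t) = ∂S_{ν-1}/∂t (x,t) + S_{ν-1}(x,t) - S_{ν+1}(x,t), where ∂S_{ν-1}/∂t denotes the partial derivative of S_{ν-1}(x,t) with respect to t. -/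
/-!
With `K_p(τ) = τ^p e^{-τ - x²/(4τ)}` one has `K_p' = p K_{p-1} - K_p + (x²/4) K_{p-2}` and
`K_p(τ) → 0` as `τ → 0⁺`. Integrating this over `(0, t)` with `p = -ν` writes `K_{-ν}(t)`, which is
`∂ₜ S_{ν-1}` up to the factor `(1/2)(x/2)^{ν-1}`, through the integrals defining `S_ν`, `S_{ν-1}`
and `S_{ν+1}`.
-/

open Real MeasureTheory

open Filter Set Topology

noncomputable def shuKernel (x p τ : ℝ) : ℝ := τ ^ p * exp (-τ - x ^ 2 / (4 * τ))

lemma shu_eq_integral_shuKernel (ν x t : ℝ) :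
    shu ν x t = 1 / 2 * (x / 2) ^ ν * ∫ τ in (0:ℝ)..t, shuKernel x (-(ν + 1)) τ := rfl

lemma continuousAt_shuKernel (x p : ℝ) {τ : ℝ} (hτ : τ ≠ 0) :
    ContinuousAt (shuKernel x p) τ := by
  unfold shuKernel
  fun_prop (disch := simp [hτ])

/-- The factor `exp (-x² / (4τ))` beats every power of `τ` as `τ → 0⁺`. -/
lemma tendsto_shuKernel_nhdsGT_zero {x : ℝ} (hx : 0 < x) (p : ℝ) :
    Tendsto (shuKernel x p) (𝓝[>] 0) (𝓝 0) := by
  have hpow : Tendsto (fun τ : ℝ => τ⁻¹ ^ (-p) * exp (-(x ^ 2 / 4) * τ⁻¹)) (𝓝[>] 0) (𝓝 0) :=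
    (tendsto_rpow_mul_exp_neg_mul_atTop_nhds_zero (-p) (x ^ 2 / 4) (by positivity)).comp
      tendsto_inv_nhdsGT_zero
  have hexp : Tendsto (fun τ : ℝ => exp (-τ)) (𝓝[>] 0) (𝓝 1) :=
    ((by fun_prop : Continuous fun τ : ℝ => exp (-τ)).tendsto' 0 1 (by simp)).mono_left
      nhdsWithin_le_nhds
  have hprod := hpow.mul hexp
  rw [zero_mul] at hprod
  refine hprod.congr' ?_
  filter_upwards [self_mem_nhdsWithin] with τ (hτ : 0 < τ)
  rw [shuKernel, inv_rpow hτ.le, rpow_neg hτ.le, inv_inv, mul_assoc, ← exp_add]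
  ring_nf

lemma intervalIntegrable_shuKernel {x : ℝ} (hx : 0 < x) (p : ℝ) {t : ℝ} (ht : 0 ≤ t) :
    IntervalIntegrable (shuKernel x p) volume 0 t := by
  classical
  -- `shuKernel x p 0 = 0 ^ p` is a junk value; patched to its limit `0`, the kernel is continuous.
  have hcont : ContinuousOn (Function.update (shuKernel x p) 0 0) (Icc 0 t) := by
    refine continuousOn_update_iff.2 ⟨fun τ hτ => ?_, fun _ => ?_⟩
    · exact (continuousAt_shuKernel x p hτ.2).continuousWithinAt
    · exact (tendsto_shuKernel_nhdsGT_zero hx p).mono_left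
        (nhdsWithin_mono _ fun τ hτ => lt_of_le_of_ne hτ.1.1 (Ne.symm hτ.2))
  refine (hcont.intervalIntegrable_of_Icc ht).congr_uIoo fun τ hτ => ?_
  rw [uIoo_of_le ht] at hτ
  exact Function.update_of_ne hτ.1.ne' _ _

lemma hasDerivAt_shuKernel (x p : ℝ) {τ : ℝ} (hτ : τ ≠ 0) :
    HasDerivAt (shuKernel x p)
      (p * shuKernel x (p - 1) τ - shuKernel x p τ + x ^ 2 / 4 * shuKernel x (p - 2) τ) τ := by
  have hexponent : HasDerivAt (fun τ : ℝ => -τ - x ^ 2 / (4 * τ)) (-1 + x ^ 2 / 4 * τ⁻¹ ^ 2) τ := by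
    have hfun : (fun τ : ℝ => -τ - x ^ 2 / (4 * τ)) = fun τ => -τ - x ^ 2 / 4 * τ⁻¹ := by
      funext s; ring
    rw [hfun]
    exact ((hasDerivAt_id' τ).neg.sub ((hasDerivAt_inv hτ).const_mul (x ^ 2 / 4))).congr_deriv
      (by rw [inv_pow]; ring)
  have hsub_two : τ ^ (p - 2) = τ ^ p / τ ^ 2 := by exact_mod_cast rpow_sub_natCast hτ p 2
  refine ((hasDerivAt_rpow_const (p := p) (Or.inl hτ)).mul hexponent.exp).congr_deriv ?_
  simp only [shuKernel, rpow_sub_one hτ, hsub_two]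
  field_simp
  ring

lemma integral_shuKernel_recurrence {x : ℝ} (hx : 0 < x) (p : ℝ) {t : ℝ} (ht : 0 < t) :
    p * (∫ τ in (0:ℝ)..t, shuKernel x (p - 1) τ) - (∫ τ in (0:ℝ)..t, shuKernel x p τ)
      + x ^ 2 / 4 * (∫ τ in (0:ℝ)..t, shuKernel x (p - 2) τ) = shuKernel x p t := by
  have hint (q : ℝ) := intervalIntegrable_shuKernel hx q ht.le
  have hint_sub := ((hint (p - 1)).const_mul p).sub (hint p)
  have hFTC := intervalIntegral.integral_eq_sub_of_hasDerivAt_of_tendsto ht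
    (fun τ hτ => hasDerivAt_shuKernel x p hτ.1.ne') (hint_sub.add ((hint (p - 2)).const_mul _))
    (tendsto_shuKernel_nhdsGT_zero hx p)
    ((continuousAt_shuKernel x p ht.ne').tendsto.mono_left nhdsWithin_le_nhds)
  rwa [intervalIntegral.integral_add hint_sub ((hint (p - 2)).const_mul _),
    intervalIntegral.integral_sub ((hint (p - 1)).const_mul p) (hint p),
    intervalIntegral.integral_const_mul, intervalIntegral.integral_const_mul, sub_zero] at hFTC

lemma hasDerivAt_shu (ν : ℝ) {x t : ℝ} (hx : 0 < x) (ht : 0 < t) :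
    HasDerivAt (shu ν x) (1 / 2 * (x / 2) ^ ν * shuKernel x (-(ν + 1)) t) t := by
  have hmeas : StronglyMeasurableAtFilter (shuKernel x (-(ν + 1))) (𝓝 t) :=
    ContinuousAt.stronglyMeasurableAtFilter isOpen_Ioi
      (fun s hs => continuousAt_shuKernel x _ hs.ne') t ht
  exact (intervalIntegral.integral_hasDerivAt_right
    (intervalIntegrable_shuKernel hx _ ht.le) hmeas (continuousAt_shuKernel x _ ht.ne')).const_mul _

theorem stmt_5 (ν x t : ℝ) (hx : 0 < x) (ht : 0 < t) :
    -(2*ν/x) * shu ν x t =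
      deriv (fun s => shu (ν-1) x s) t + shu (ν-1) x t - shu (ν+1) x t := by
  have hx2 : x / 2 ≠ 0 := by positivity
  have hrec := integral_shuKernel_recurrence hx (-ν) ht
  rw [show -ν - 1 = -(ν + 1) by ring, show -ν - 2 = -(ν + 1 + 1) by ring] at hrec
  rw [(hasDerivAt_shu (ν - 1) hx ht).deriv]
  simp only [shu_eq_integral_shuKernel, ← hrec, sub_add_cancel, rpow_sub_one hx2, rpow_add_one hx2]
  field_simp
  ring
end

section
/- For every real ν, every x > 0 and every t > 0, the Shu function satisfies the second recurrence relation -2·∂S_ν/∂x (x,t) = ∂S_{ν-1}/∂t (x,t) + S_{ν-1}(x,t) + S_{ν+1}(x,t), where ∂S_ν/∂x denotes the partial derivative with respect to the argument x and ∂S_{ν-1}/∂t denotes the partial derivative with respect to the endpoint t. -/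
open Real MeasureTheory

/-!
With `f_a(x, τ) = τ^a e^{-τ - x²/(4τ)}` we have `S_ν = ½ (x/2)^ν ∫₀ᵗ f_{-(ν+1)}`.
Differentiating under the integral sign, `∂ₓ f_a = -(x/2) f_{a-1}` (dominated near `x` by a
multiple of `f_{a-1}(x/2, ·)`), while `∂ₜ` just evaluates the integrand at `t`. The recurrence
then reduces to integrating `∂_τ f_{-ν} = (x²/4) f_{-ν-2} - f_{-ν} - ν f_{-ν-1}` over `(0, t]`,
with no boundary term at `0` because `e^{-x²/(4τ)}` beats every power of `τ`.
-/

open Set Filter Topology Function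

noncomputable def shuIntegrand (a x τ : ℝ) : ℝ := τ ^ a * exp (-τ - x ^ 2 / (4 * τ))

noncomputable def shuIntegral (a x t : ℝ) : ℝ := ∫ τ in (0:ℝ)..t, shuIntegrand a x τ

lemma shu_eq_shuIntegral (ν x t : ℝ) :
    shu ν x t = 1 / 2 * (x / 2) ^ ν * shuIntegral (-(ν + 1)) x t := rfl

section Integrand

variable {a x τ : ℝ}

lemma shuIntegrand_nonneg (hτ : 0 ≤ τ) : 0 ≤ shuIntegrand a x τ := by
  unfold shuIntegrand; positivity

lemma shuIntegrand_sub_one (hτ : 0 < τ) :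
    shuIntegrand (a - 1) x τ = τ⁻¹ * shuIntegrand a x τ := by
  simp only [shuIntegrand, rpow_sub_one hτ.ne']
  field_simp

lemma shuIntegrand_le_of_sq_le {y : ℝ} (hτ : 0 < τ) (hxy : x ^ 2 ≤ y ^ 2) :
    shuIntegrand a y τ ≤ shuIntegrand a x τ := by
  unfold shuIntegrand
  gcongr

lemma measurable_shuIntegrand : Measurable (shuIntegrand a x) := by
  unfold shuIntegrand; fun_prop

lemma continuousAt_shuIntegrand (hτ : τ ≠ 0) : ContinuousAt (shuIntegrand a x) τ := by
  unfold shuIntegrand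
  fun_prop (disch := simp [hτ])

lemma hasDerivAt_shuIntegrand_param (hτ : 0 < τ) :
    HasDerivAt (fun y => shuIntegrand a y τ) (-(x / 2) * shuIntegrand (a - 1) x τ) x := by
  have h := (((hasDerivAt_pow 2 x).div_const (4 * τ)).const_sub (-τ)).exp.const_mul (τ ^ a)
  refine h.congr_deriv ?_
  rw [shuIntegrand_sub_one hτ, shuIntegrand]
  field_simp
  ring

lemma norm_deriv_shuIntegrand_param_le {y : ℝ} (hτ : 0 < τ)
    (hy : y ∈ Metric.ball x (|x| / 2)) :
    ‖-(y / 2) * shuIntegrand (a - 1) y τ‖ ≤ 3 * |x| / 4 * shuIntegrand (a - 1) (x / 2) τ := by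
  rw [Metric.mem_ball, Real.dist_eq] at hy
  have hy_le : |y| ≤ 3 * |x| / 2 := by linarith [abs_sub_abs_le_abs_sub y x]
  have hy_ge : |x / 2| ≤ |y| := by
    linarith [abs_sub_abs_le_abs_sub x y, abs_sub_comm x y, abs_div x 2]
  rw [norm_mul, norm_neg, Real.norm_eq_abs, Real.norm_eq_abs, abs_div, abs_two,
    abs_of_nonneg (shuIntegrand_nonneg hτ.le)]
  exact mul_le_mul (by linarith) (shuIntegrand_le_of_sq_le hτ (sq_le_sq.2 hy_ge))
    (shuIntegrand_nonneg hτ.le) (by positivity)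

lemma hasDerivAt_shuIntegrand (hτ : 0 < τ) :
    HasDerivAt (shuIntegrand a x)
      (x ^ 2 / 4 * shuIntegrand (a - 2) x τ - shuIntegrand a x τ
        + a * shuIntegrand (a - 1) x τ) τ := by
  have h := (hasDerivAt_rpow_const (p := a) (Or.inl hτ.ne')).mul
    ((hasDerivAt_neg τ).sub ((hasDerivAt_const τ (x ^ 2)).div
      ((hasDerivAt_id τ).const_mul 4) (by simp [hτ.ne']))).exp
  refine h.congr_deriv ?_
  rw [show a - 2 = a - 1 - 1 by ring, shuIntegrand_sub_one hτ, shuIntegrand_sub_one hτ,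
    shuIntegrand, rpow_sub_one hτ.ne']
  dsimp only [Pi.sub_apply, Pi.div_apply, id]
  field_simp
  ring

lemma tendsto_shuIntegrand_nhdsGT_zero (hx : x ≠ 0) :
    Tendsto (shuIntegrand a x) (𝓝[>] 0) (𝓝 0) := by
  have hdecay : Tendsto (fun τ : ℝ => τ⁻¹ ^ (-a) * exp (-(x ^ 2 / 4) * τ⁻¹)) (𝓝[>] 0) (𝓝 0) :=
    (tendsto_rpow_mul_exp_neg_mul_atTop_nhds_zero (-a) (x ^ 2 / 4) (by positivity)).comp
      tendsto_inv_nhdsGT_zero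
  have hexp : Tendsto (fun τ : ℝ => exp (-τ)) (𝓝[>] 0) (𝓝 1) := by
    simpa using (continuous_neg.rexp.tendsto 0).mono_left nhdsWithin_le_nhds
  have hlim := hdecay.mul hexp
  rw [zero_mul] at hlim
  refine hlim.congr' (eventually_nhdsWithin_of_forall fun τ (hτ : 0 < τ) => ?_)
  simp only [shuIntegrand, inv_rpow hτ.le, ← rpow_neg hτ.le, neg_neg, mul_assoc, ← exp_add]
  congr 2
  field_simp
  ring

end Integrand

section Integral

variable {a x t : ℝ}

/-- At `τ = 0` the formula is junk (`x ^ 2 / (4 * 0) = 0`), so the integrand is replaced there by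
its limit `0`. -/
lemma continuousOn_update_shuIntegrand (hx : x ≠ 0) :
    ContinuousOn (update (shuIntegrand a x) 0 0) (Ici 0) := by
  rw [continuousOn_update_iff, Ici_sdiff_left]
  exact ⟨fun τ hτ => (continuousAt_shuIntegrand (ne_of_gt hτ)).continuousWithinAt,
    fun _ => tendsto_shuIntegrand_nhdsGT_zero hx⟩

lemma intervalIntegrable_shuIntegrand (hx : x ≠ 0) (ht : 0 ≤ t) :
    IntervalIntegrable (shuIntegrand a x) volume 0 t := by
  refine (((continuousOn_update_shuIntegrand (a := a) hx).mono
    Icc_subset_Ici_self).intervalIntegrable_of_Icc ht).congr_uIoo fun τ hτ => ?_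
  rw [uIoo_of_le ht] at hτ
  exact update_of_ne hτ.1.ne' _ _

/-- `hasDerivAt_shuIntegrand` integrated over `[0, t]`; the boundary term at `0` vanishes. -/
lemma shuIntegrand_eq_shuIntegral (hx : x ≠ 0) (ht : 0 < t) :
    shuIntegrand a x t = x ^ 2 / 4 * shuIntegral (a - 2) x t - shuIntegral a x t
      + a * shuIntegral (a - 1) x t := by
  have hint := intervalIntegrable_shuIntegrand (a := a) hx ht.le
  have hint₁ := intervalIntegrable_shuIntegrand (a := a - 1) hx ht.le
  have hint₂ := intervalIntegrable_shuIntegrand (a := a - 2) hx ht.le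
  have hftc := intervalIntegral.integral_eq_sub_of_hasDerivAt_of_le ht.le
    ((continuousOn_update_shuIntegrand (a := a) hx).mono Icc_subset_Ici_self)
    (fun τ hτ => (hasDerivAt_shuIntegrand hτ.1).congr_of_eventuallyEq
      ((eventually_ne_nhds hτ.1.ne').mono fun s hs => update_of_ne hs _ _))
    (((hint₂.const_mul _).sub hint).add (hint₁.const_mul _))
  rw [update_of_ne ht.ne', update_self, sub_zero, intervalIntegral.integral_add
    ((hint₂.const_mul _).sub hint) (hint₁.const_mul _), intervalIntegral.integral_sub
    (hint₂.const_mul _) hint, intervalIntegral.integral_const_mul,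
    intervalIntegral.integral_const_mul] at hftc
  exact hftc.symm

lemma hasDerivAt_shuIntegral_right (hx : x ≠ 0) (ht : 0 < t) :
    HasDerivAt (shuIntegral a x) (shuIntegrand a x t) t :=
  intervalIntegral.integral_hasDerivAt_right (intervalIntegrable_shuIntegrand hx ht.le)
    (ContinuousAt.stronglyMeasurableAtFilter isOpen_Ioi
      (fun _ hτ => continuousAt_shuIntegrand (ne_of_gt hτ)) t ht)
    (continuousAt_shuIntegrand ht.ne')

lemma hasDerivAt_shuIntegral_param (hx : x ≠ 0) (ht : 0 ≤ t) :
    HasDerivAt (fun y => shuIntegral a y t) (-(x / 2) * shuIntegral (a - 1) x t) x := by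
  have hderiv := intervalIntegral.hasDerivAt_integral_of_dominated_loc_of_deriv_le
    (F := fun y τ => shuIntegrand a y τ) (F' := fun y τ => -(y / 2) * shuIntegrand (a - 1) y τ)
    (Metric.ball_mem_nhds x (by positivity : 0 < |x| / 2))
    (Eventually.of_forall fun _ => measurable_shuIntegrand.aestronglyMeasurable)
    (intervalIntegrable_shuIntegrand hx ht)
    (measurable_const.mul measurable_shuIntegrand).aestronglyMeasurable
    (Eventually.of_forall fun τ hτ y hy => norm_deriv_shuIntegrand_param_le ?_ hy)
    ((intervalIntegrable_shuIntegrand (a := a - 1) (by simpa using hx) ht).const_mul (3 * |x| / 4))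
    (Eventually.of_forall fun τ hτ y _ => hasDerivAt_shuIntegrand_param ?_)
  · simpa only [shuIntegral, intervalIntegral.integral_const_mul] using hderiv.2
  all_goals rw [uIoc_of_le ht] at hτ; exact hτ.1

end Integral

section Shu

variable {ν x t : ℝ}

lemma hasDerivAt_shu_param (hx : x ≠ 0) (ht : 0 ≤ t) :
    HasDerivAt (fun y => shu ν y t)
      (ν / 4 * (x / 2) ^ (ν - 1) * shuIntegral (-(ν + 1)) x t
        - x / 4 * (x / 2) ^ ν * shuIntegral (-(ν + 2)) x t) x := by
  have hpow : HasDerivAt (fun y : ℝ => 1 / 2 * (y / 2) ^ ν)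
      (1 / 2 * (ν * (x / 2) ^ (ν - 1) * (1 / 2))) x :=
    ((hasDerivAt_rpow_const (Or.inl (by simpa using hx))).comp x
      ((hasDerivAt_id x).div_const 2)).const_mul _
  refine (hpow.mul (hasDerivAt_shuIntegral_param (a := -(ν + 1)) hx ht)).congr_deriv ?_
  rw [show -(ν + 1) - 1 = -(ν + 2) by ring]
  ring

lemma hasDerivAt_shu_right (hx : x ≠ 0) (ht : 0 < t) :
    HasDerivAt (shu ν x) (1 / 2 * (x / 2) ^ ν * shuIntegrand (-(ν + 1)) x t) t :=
  (hasDerivAt_shuIntegral_right hx ht).const_mul _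

end Shu

theorem stmt_6 (ν x t : ℝ) (hx : 0 < x) (ht : 0 < t) :
    -2 * deriv (fun y => shu ν y t) x =
      deriv (fun s => shu (ν-1) x s) t + shu (ν-1) x t + shu (ν+1) x t := by
  have hx2 : x / 2 ≠ 0 := by positivity
  rw [(hasDerivAt_shu_param hx.ne' ht.le).deriv, (hasDerivAt_shu_right hx.ne' ht).deriv,
    shu_eq_shuIntegral, shu_eq_shuIntegral, show -(ν - 1 + 1) = -ν by ring,
    show -(ν + 1 + 1) = -(ν + 2) by ring, shuIntegrand_eq_shuIntegral hx.ne' ht,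
    show -ν - 2 = -(ν + 2) by ring, show -ν - 1 = -(ν + 1) by ring,
    rpow_sub_one hx2, rpow_add_one hx2]
  field_simp
  ring
end

section
/- For every real ν and every fixed t > 0, the Shu function has the leading-order behavior S_ν(x,t) ~ x^ν · exp(-x²/(4t) - t) / ( (2t)^{ν-1} · (x² - 4t²) ) as x → +∞; that is, the ratio S_ν(x,t) · (2t)^{ν-1} · (x² - 4t²) · exp(x²/(4t) + t) / x^ν tends to 1 as x tends to +∞. -/
/-!
Substituting `u = 1/τ - 1/t` turns the Shu integral into a Laplace transform:
`S_ν(x,t) = ½ (x/2)^ν e^{-x²/(4t)} ∫_0^∞ e^{-(x²/4) u} g(u) du` with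
`g(u) = (u + 1/t)^{ν-1} e^{-1/(u + 1/t)}`. By the initial value theorem for the Laplace transform,
`μ ∫_0^∞ e^{-μu} g(u) du → g(0) = t^{1-ν} e^{-t}` as `μ → ∞`, and with `μ = x²/4` this is the
claimed asymptotics.
-/

open Real MeasureTheory Filter

open Set Topology

theorem tendsto_smul_integral_exp_neg_mul_smul_atTop {E : Type*} [NormedAddCommGroup E]
    [NormedSpace ℝ E] [CompleteSpace E] {g : ℝ → E} (hg : StronglyMeasurable g)
    (hg0 : ContinuousWithinAt g (Ioi 0) 0) {C s : ℝ}
    (hbound : ∀ u ∈ Ioi (0 : ℝ), ‖g u‖ ≤ C * exp (s * u)) :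
    Tendsto (fun μ : ℝ => μ • ∫ u in Ioi 0, exp (-(μ * u)) • g u) atTop (𝓝 (g 0)) := by
  -- the substitution `u = v / μ` reduces the claim to dominated convergence
  have hrescale : ∀ μ > (0 : ℝ), μ • ∫ u in Ioi 0, exp (-(μ * u)) • g u
      = ∫ v in Ioi 0, exp (-v) • g (μ⁻¹ * v) := by
    intro μ hμ
    have h := integral_comp_mul_left_Ioi (fun u => exp (-(μ * u)) • g u) 0 (inv_pos.2 hμ)
    simp only [inv_inv, mul_zero, ← mul_assoc, mul_inv_cancel₀ hμ.ne', one_mul] at h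
    exact h.symm
  have hlim : Tendsto (fun μ : ℝ => ∫ v in Ioi 0, exp (-v) • g (μ⁻¹ * v)) atTop
      (𝓝 (∫ v in Ioi 0, exp (-v) • g 0)) := by
    refine tendsto_integral_filter_of_dominated_convergence (fun v => C * exp (-(1 / 2) * v))
      (Eventually.of_forall fun μ => ?_) ?_ ((exp_neg_integrableOn_Ioi 0 one_half_pos).const_mul C)
      ?_
    · exact (continuous_exp.comp continuous_neg).aestronglyMeasurable.smul
        (hg.comp_measurable (measurable_const_mul μ⁻¹)).aestronglyMeasurable
    · filter_upwards [eventually_ge_atTop (2 * s), eventually_gt_atTop 0] with μ hμs hμ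
      filter_upwards [ae_restrict_mem measurableSet_Ioi] with v (hv : 0 < v)
      have hC : 0 ≤ C := by
        by_contra! hC
        exact (norm_nonneg _).not_gt ((hbound 1 (mem_Ioi.2 one_pos)).trans_lt
          (mul_neg_of_neg_of_pos hC (exp_pos _)))
      have hsμ : s * (μ⁻¹ * v) ≤ v / 2 := by
        have : s / μ ≤ 1 / 2 := by rw [div_le_iff₀ hμ]; linarith
        calc s * (μ⁻¹ * v) = s / μ * v := by ring
          _ ≤ 1 / 2 * v := by gcongr
          _ = v / 2 := by ring
      calc ‖exp (-v) • g (μ⁻¹ * v)‖ = exp (-v) * ‖g (μ⁻¹ * v)‖ := by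
            rw [norm_smul, norm_of_nonneg (exp_pos _).le]
        _ ≤ exp (-v) * (C * exp (s * (μ⁻¹ * v))) :=
            mul_le_mul_of_nonneg_left (hbound _ (mem_Ioi.2 (by positivity))) (exp_pos _).le
        _ ≤ exp (-v) * (C * exp (v / 2)) := by gcongr
        _ = C * exp (-(1 / 2) * v) := by rw [mul_left_comm, ← exp_add]; ring_nf
    · filter_upwards [ae_restrict_mem measurableSet_Ioi] with v (hv : 0 < v)
      refine tendsto_const_nhds.smul (hg0.tendsto.comp ?_)
      refine tendsto_nhdsWithin_iff.2 ⟨?_, ?_⟩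
      · simpa using tendsto_inv_atTop_zero.mul_const v
      · filter_upwards [eventually_gt_atTop 0] with μ hμ using mem_Ioi.2 (by positivity)
  rw [integral_smul_const, integral_exp_neg_Ioi_zero, one_smul] at hlim
  exact hlim.congr' (by filter_upwards [eventually_gt_atTop 0] with μ hμ using (hrescale μ hμ).symm)

noncomputable def shuProfile (ν t u : ℝ) : ℝ :=
  (u + t⁻¹) ^ (ν - 1) * exp (-(u + t⁻¹)⁻¹)

theorem image_inv_sub_inv_Ioo {t : ℝ} (ht : 0 < t) :
    (fun τ : ℝ => τ⁻¹ - t⁻¹) '' Ioo 0 t = Ioi 0 := by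
  ext u
  constructor
  · rintro ⟨τ, ⟨hτ0, hτt⟩, rfl⟩
    exact sub_pos.2 ((inv_lt_inv₀ ht hτ0).2 hτt)
  · intro (hu : 0 < u)
    refine ⟨(u + t⁻¹)⁻¹, ⟨by positivity, ?_⟩, by simp⟩
    rw [inv_lt_comm₀ (by positivity) ht]
    linarith

theorem integral_Ioc_rpow_mul_exp_eq (ν c : ℝ) {t : ℝ} (ht : 0 < t) :
    ∫ τ in Ioc 0 t, τ ^ (-(ν + 1)) * exp (-τ - c / τ)
      = exp (-(c / t)) * ∫ u in Ioi 0, exp (-(c * u)) * shuProfile ν t u := by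
  have hderiv : ∀ τ ∈ Ioo 0 t, HasDerivWithinAt (fun τ : ℝ => τ⁻¹ - t⁻¹) (-(τ ^ 2)⁻¹) (Ioo 0 t) τ :=
    fun τ hτ => ((hasDerivAt_inv hτ.1.ne').sub_const _).hasDerivWithinAt
  have hinj : InjOn (fun τ : ℝ => τ⁻¹ - t⁻¹) (Ioo 0 t) :=
    fun τ _ σ _ h => inv_injective (sub_left_injective h)
  rw [← image_inv_sub_inv_Ioo ht, integral_image_eq_integral_abs_deriv_smul measurableSet_Ioo
    hderiv hinj, integral_Ioc_eq_integral_Ioo, ← integral_const_mul]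
  refine setIntegral_congr_fun measurableSet_Ioo fun τ ⟨hτ, _⟩ => ?_
  have hpow : τ ^ (-(ν + 1)) = (τ⁻¹) ^ (ν - 1) * (τ ^ 2)⁻¹ := by
    rw [inv_rpow hτ.le, ← rpow_neg hτ.le, ← rpow_natCast, ← rpow_neg hτ.le, ← rpow_add hτ]
    push_cast; ring_nf
  rw [shuProfile, sub_add_cancel, inv_inv, abs_neg, abs_of_pos (by positivity), smul_eq_mul, hpow]
  have hexp : exp (-τ - c / τ) = exp (-(c / t)) * exp (-(c * (τ⁻¹ - t⁻¹))) * exp (-τ) := by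
    rw [← exp_add, ← exp_add]; ring_nf
  rw [hexp]; ring

theorem exists_rpow_add_le_mul_exp (p : ℝ) {a : ℝ} (ha : 0 < a) :
    ∃ C s : ℝ, ∀ u : ℝ, 0 ≤ u → (u + a) ^ p ≤ C * exp (s * u) := by
  rcases le_total 0 p with hp | hp
  · refine ⟨exp (p * a), p, fun u hu => ?_⟩
    calc (u + a) ^ p ≤ exp (u + a) ^ p :=
          rpow_le_rpow (by positivity) (by linarith [add_one_le_exp (u + a)]) hp
      _ = exp (p * a) * exp (p * u) := by rw [← exp_mul, ← exp_add]; ring_nf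
  · exact ⟨a ^ p, 0, fun u hu => by simpa using rpow_le_rpow_of_nonpos ha (by linarith) hp⟩

theorem exists_norm_shuProfile_le (ν : ℝ) {t : ℝ} (ht : 0 < t) :
    ∃ C s : ℝ, ∀ u ∈ Ioi (0 : ℝ), ‖shuProfile ν t u‖ ≤ C * exp (s * u) := by
  obtain ⟨C, s, hCs⟩ := exists_rpow_add_le_mul_exp (ν - 1) (inv_pos.2 ht)
  refine ⟨C, s, fun u (hu : 0 < u) => ?_⟩
  have hexp : exp (-(u + t⁻¹)⁻¹) ≤ 1 := exp_le_one_iff.2 (by simp; positivity)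
  rw [shuProfile, norm_of_nonneg (by positivity)]
  calc (u + t⁻¹) ^ (ν - 1) * exp (-(u + t⁻¹)⁻¹) ≤ (u + t⁻¹) ^ (ν - 1) :=
        mul_le_of_le_one_right (by positivity) hexp
    _ ≤ C * exp (s * u) := hCs u hu.le

theorem continuousAt_shuProfile_zero (ν : ℝ) {t : ℝ} (ht : 0 < t) :
    ContinuousAt (shuProfile ν t) 0 := by
  have hbase : ContinuousAt (fun u : ℝ => u + t⁻¹) 0 := by fun_prop
  have hne : (0 : ℝ) + t⁻¹ ≠ 0 := by positivity
  exact (hbase.rpow_const (Or.inl hne)).mul (hbase.inv₀ hne).neg.rexp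

theorem shu_ratio_eq_laplace (ν : ℝ) {t x : ℝ} (ht : 0 < t) (hx : 0 < x) :
    shu ν x t * (2 * t) ^ (ν - 1) * (x ^ 2 - 4 * t ^ 2) * exp (x ^ 2 / (4 * t) + t) / x ^ ν
      = t ^ (ν - 1) * exp t *
          ((x ^ 2 / 4 - t ^ 2) * ∫ u in Ioi 0, exp (-(x ^ 2 / 4 * u)) * shuProfile ν t u) := by
  simp only [shu, intervalIntegral.integral_of_le ht.le, div_mul_eq_div_div]
  rw [integral_Ioc_rpow_mul_exp_eq ν (x ^ 2 / 4) ht, div_rpow hx.le zero_le_two,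
    mul_rpow zero_le_two ht.le, rpow_sub_one two_ne_zero, exp_add, exp_neg]
  have h2 : (0 : ℝ) < 2 ^ ν := by positivity
  have hxν : 0 < x ^ ν := by positivity
  have hE : 0 < exp (x ^ 2 / 4 / t) := exp_pos _
  generalize exp (x ^ 2 / 4 / t) = E at hE ⊢
  field_simp
  ring

theorem stmt_16 (ν t : ℝ) (ht : 0 < t) :
    Tendsto (fun x : ℝ =>
        shu ν x t * (2*t) ^ (ν-1) * (x^2 - 4*t^2) * Real.exp (x^2 / (4*t) + t) / x ^ ν)
      atTop (nhds 1) := by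
  set L : ℝ → ℝ := fun μ => ∫ u in Ioi 0, exp (-(μ * u)) * shuProfile ν t u
  obtain ⟨C, s, hbound⟩ := exists_norm_shuProfile_le ν ht
  have hμL : Tendsto (fun μ => μ * L μ) atTop (𝓝 (shuProfile ν t 0)) := by
    simpa only [smul_eq_mul] using tendsto_smul_integral_exp_neg_mul_smul_atTop
      (by unfold shuProfile; fun_prop : Measurable (shuProfile ν t)).stronglyMeasurable
      (continuousAt_shuProfile_zero ν ht).continuousWithinAt hbound
  have hL : Tendsto L atTop (𝓝 0) := by
    refine (zero_mul (shuProfile ν t 0) ▸ tendsto_inv_atTop_zero.mul hμL).congr' ?_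
    filter_upwards [eventually_ne_atTop 0] with μ hμ using inv_mul_cancel_left₀ hμ _
  have hlim : t ^ (ν - 1) * exp t * (shuProfile ν t 0 - t ^ 2 * 0) = 1 := by
    rw [shuProfile, zero_add, inv_inv, mul_zero, sub_zero, exp_neg, inv_rpow ht.le]
    field_simp
  have hsq : Tendsto (fun x : ℝ => x ^ 2 / 4) atTop atTop :=
    (tendsto_pow_atTop two_ne_zero).atTop_div_const four_pos
  refine (hlim ▸ ((hμL.sub (hL.const_mul (t ^ 2))).const_mul _).comp hsq).congr' ?_
  filter_upwards [eventually_gt_atTop 0] with x hx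
  rw [shu_ratio_eq_laplace ν ht hx]
  simp only [Function.comp_apply, L]
  ring
end

section
/- For every real ν and every fixed t > 0, the incomplete modified Bessel function has the leading-order behavior (1/2)·∫_t^∞ exp(-x·cosh(τ))·cosh(ν·τ) dτ ~ cosh(ν·t)·exp(-x·cosh(t)) / (2·x·sinh(t)) as x → +∞; that is, the ratio of the integral to cosh(ν·t)·exp(-x·cosh(t))/(2·x·sinh(t)) tends to 1 as x tends to +∞. -/
/-!
Write `K(x) = (1/2) ∫_t^∞ e^{-x cosh τ} cosh(ντ) dτ` and
`L(x) = cosh(νt) e^{-x cosh t} / (2x sinh t)`.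
Upper bound: cosh is convex, so `cosh τ ≥ cosh t + sinh t (τ - t)`, and
`cosh(ντ) ≤ cosh(νt) e^{|ν|(τ - t)}`; integrating the resulting exponential gives
`K/L ≤ x sinh t / (x sinh t - |ν|)`.
Lower bound: on `[t, t + δ]` we have `cosh(ντ) ≥ cosh(νt) sinh τ / sinh(t + δ)`, and
`e^{-x cosh τ} sinh τ` has an elementary antiderivative, giving
`K/L ≥ sinh t / sinh(t + δ) · (1 - e^{-x (cosh(t + δ) - cosh t)})`.
Letting `x → ∞` and then `δ → 0` squeezes `K/L` to `1`.
-/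

open Real MeasureTheory Filter Set Topology

lemma sinh_mul_sub_le_cosh_sub_cosh {t τ : ℝ} (h : t ≤ τ) :
    sinh t * (τ - t) ≤ cosh τ - cosh t :=
  (convex_Ici t).mul_sub_le_image_sub_of_le_deriv continuous_cosh.continuousOn
    differentiable_cosh.differentiableOn
    (fun y hy => by
      rw [interior_Ici] at hy
      rw [Real.deriv_cosh]
      exact sinh_le_sinh.2 (le_of_lt hy))
    t self_mem_Ici τ h h

lemma cosh_add_abs_sinh (y : ℝ) : cosh y + |sinh y| = exp |y| := by
  rw [abs_sinh, ← cosh_abs, cosh_add_sinh]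

lemma cosh_mul_le_cosh_mul_mul_exp (ν : ℝ) {t τ : ℝ} (h : t ≤ τ) :
    cosh (ν * τ) ≤ cosh (ν * t) * exp (|ν| * (τ - t)) := by
  have hs : |sinh (ν * t)| ≤ cosh (ν * t) := by
    rw [abs_sinh, ← cosh_abs (ν * t)]; exact (sinh_lt_cosh _).le
  calc cosh (ν * τ)
      = cosh (ν * t) * cosh (ν * (τ - t)) + sinh (ν * t) * sinh (ν * (τ - t)) := by
        rw [← cosh_add]; ring_nf
    _ ≤ cosh (ν * t) * cosh (ν * (τ - t)) + cosh (ν * t) * |sinh (ν * (τ - t))| := by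
        refine add_le_add_right ?_ _
        calc sinh (ν * t) * sinh (ν * (τ - t)) ≤ |sinh (ν * t)| * |sinh (ν * (τ - t))| := by
              rw [← abs_mul]; exact le_abs_self _
          _ ≤ _ := by gcongr
    _ = cosh (ν * t) * exp (|ν| * (τ - t)) := by
        rw [← mul_add, cosh_add_abs_sinh, abs_mul, abs_of_nonneg (sub_nonneg.2 h)]

lemma integral_exp_neg_mul_cosh_mul_sinh {x : ℝ} (hx : x ≠ 0) (a b : ℝ) :
    ∫ τ in a..b, exp (-x * cosh τ) * sinh τ = (exp (-x * cosh a) - exp (-x * cosh b)) / x := by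
  have hderiv (τ : ℝ) :
      HasDerivAt (fun τ => -exp (-x * cosh τ) / x) (exp (-x * cosh τ) * sinh τ) τ :=
    (((hasDerivAt_cosh τ).const_mul (-x)).exp.neg.div_const x).congr_deriv (by field_simp)
  rw [intervalIntegral.integral_eq_sub_of_hasDerivAt (fun τ _ => hderiv τ)
    ((by fun_prop : Continuous fun τ => exp (-x * cosh τ) * sinh τ).intervalIntegrable _ _)]
  ring

lemma exp_neg_mul_sub (c t τ : ℝ) : exp (-c * (τ - t)) = exp (c * t) * exp (-c * τ) := by
  rw [← exp_add]; ring_nf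

lemma integral_exp_neg_mul_sub_Ioi {c : ℝ} (hc : 0 < c) (t : ℝ) :
    ∫ τ in Ioi t, exp (-c * (τ - t)) = c⁻¹ := by
  simp_rw [exp_neg_mul_sub c t]
  rw [integral_const_mul, integral_exp_mul_Ioi (neg_lt_zero.2 hc), neg_div_neg_eq,
    ← mul_div_assoc, ← exp_add]
  simp

lemma integrableOn_exp_neg_mul_sub_Ioi {c : ℝ} (hc : 0 < c) (t : ℝ) :
    IntegrableOn (fun τ => exp (-c * (τ - t))) (Ioi t) := by
  simp_rw [exp_neg_mul_sub c t]
  exact (integrableOn_exp_mul_Ioi (neg_lt_zero.2 hc) t).const_mul _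

noncomputable def incBesselK (ν x t : ℝ) : ℝ :=
  (1/2) * ∫ τ in Ioi t, exp (-x * cosh τ) * cosh (ν * τ)

noncomputable def incBesselKLeading (ν x t : ℝ) : ℝ :=
  cosh (ν * t) * exp (-x * cosh t) / (2 * x * sinh t)

lemma exp_neg_mul_cosh_mul_cosh_le (ν : ℝ) {x t τ : ℝ} (hx : 0 ≤ x) (h : t ≤ τ) :
    exp (-x * cosh τ) * cosh (ν * τ) ≤
      cosh (ν * t) * exp (-x * cosh t) * exp (-(x * sinh t - |ν|) * (τ - t)) := by
  have hcosh : exp (-x * cosh τ) ≤ exp (-x * cosh t - x * sinh t * (τ - t)) :=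
    exp_le_exp.2 (by nlinarith [sinh_mul_sub_le_cosh_sub_cosh h])
  calc exp (-x * cosh τ) * cosh (ν * τ)
      ≤ exp (-x * cosh t - x * sinh t * (τ - t)) * (cosh (ν * t) * exp (|ν| * (τ - t))) :=
        mul_le_mul hcosh (cosh_mul_le_cosh_mul_mul_exp ν h) (cosh_pos _).le (exp_pos _).le
    _ = _ := by rw [mul_left_comm, ← exp_add, mul_assoc (cosh _), ← exp_add]; ring_nf

lemma integrableOn_exp_neg_mul_cosh_mul_cosh {ν x t : ℝ} (hx : 0 ≤ x)
    (hν : |ν| < x * sinh t) :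
    IntegrableOn (fun τ => exp (-x * cosh τ) * cosh (ν * τ)) (Ioi t) :=
  ((integrableOn_exp_neg_mul_sub_Ioi (sub_pos.2 hν) t).const_mul
      (cosh (ν * t) * exp (-x * cosh t))).mono'
    (by fun_prop : Continuous fun τ => exp (-x * cosh τ) * cosh (ν * τ)).aestronglyMeasurable
    (ae_restrict_of_forall_mem measurableSet_Ioi fun τ hτ => by
      rw [norm_of_nonneg (by positivity)]
      exact exp_neg_mul_cosh_mul_cosh_le ν hx (le_of_lt hτ))

lemma incBesselK_le {ν x t : ℝ} (hx : 0 ≤ x) (hν : |ν| < x * sinh t) :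
    incBesselK ν x t ≤ cosh (ν * t) * exp (-x * cosh t) / (2 * (x * sinh t - |ν|)) := by
  have hc : 0 < x * sinh t - |ν| := sub_pos.2 hν
  calc incBesselK ν x t
      ≤ (1/2) * ∫ τ in Ioi t,
          cosh (ν * t) * exp (-x * cosh t) * exp (-(x * sinh t - |ν|) * (τ - t)) := by
        refine mul_le_mul_of_nonneg_left ?_ (by norm_num)
        exact setIntegral_mono_on (integrableOn_exp_neg_mul_cosh_mul_cosh hx hν)
          ((integrableOn_exp_neg_mul_sub_Ioi hc t).const_mul _) measurableSet_Ioi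
          fun τ hτ => exp_neg_mul_cosh_mul_cosh_le ν hx (le_of_lt hτ)
    _ = _ := by
        rw [integral_const_mul, integral_exp_neg_mul_sub_Ioi hc]
        field_simp

lemma le_incBesselK {ν x t δ : ℝ} (hx : x ≠ 0) (ht : 0 ≤ t) (hδ : 0 < δ)
    (hint : IntegrableOn (fun τ => exp (-x * cosh τ) * cosh (ν * τ)) (Ioi t)) :
    cosh (ν * t) * (exp (-x * cosh t) - exp (-x * cosh (t + δ))) / (2 * x * sinh (t + δ)) ≤
      incBesselK ν x t := by
  have hs : 0 < sinh (t + δ) := sinh_pos_iff.2 (by linarith)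
  have hpoint : ∀ τ ∈ Ioc t (t + δ),
      cosh (ν * t) / sinh (t + δ) * (exp (-x * cosh τ) * sinh τ) ≤
        exp (-x * cosh τ) * cosh (ν * τ) := by
    rintro τ ⟨htτ, hτδ⟩
    have hcosh : cosh (ν * t) ≤ cosh (ν * τ) := by
      rw [cosh_le_cosh, abs_mul, abs_mul]
      gcongr
    have hsinh : sinh τ ≤ sinh (t + δ) := sinh_le_sinh.2 hτδ
    have hsinh₀ : 0 ≤ sinh τ := sinh_nonneg_iff.2 (by linarith)
    rw [div_mul_eq_mul_div, div_le_iff₀ hs]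
    calc cosh (ν * t) * (exp (-x * cosh τ) * sinh τ)
        ≤ cosh (ν * τ) * (exp (-x * cosh τ) * sinh (t + δ)) := by gcongr
      _ = _ := by ring
  calc cosh (ν * t) * (exp (-x * cosh t) - exp (-x * cosh (t + δ))) / (2 * x * sinh (t + δ))
      = (1/2) * (cosh (ν * t) / sinh (t + δ) *
          ∫ τ in t..t + δ, exp (-x * cosh τ) * sinh τ) := by
        rw [integral_exp_neg_mul_cosh_mul_sinh hx]
        field_simp
    _ = (1/2) * ∫ τ in Ioc t (t + δ),
          cosh (ν * t) / sinh (t + δ) * (exp (-x * cosh τ) * sinh τ) := by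
        rw [intervalIntegral.integral_of_le (by linarith), integral_const_mul]
    _ ≤ (1/2) * ∫ τ in Ioc t (t + δ), exp (-x * cosh τ) * cosh (ν * τ) := by
        refine mul_le_mul_of_nonneg_left ?_ (by norm_num)
        exact setIntegral_mono_on
          (Continuous.integrableOn_Ioc (by fun_prop)) (hint.mono_set Ioc_subset_Ioi_self)
          measurableSet_Ioc hpoint
    _ ≤ incBesselK ν x t := by
        refine mul_le_mul_of_nonneg_left ?_ (by norm_num)
        exact setIntegral_mono_set hint (ae_of_all _ fun τ => by positivity)
          (ae_of_all _ Ioc_subset_Ioi_self)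

lemma incBesselKLeading_pos (ν : ℝ) {x t : ℝ} (hx : 0 < x) (ht : 0 < t) :
    0 < incBesselKLeading ν x t := by
  have hs : 0 < sinh t := sinh_pos_iff.2 ht
  unfold incBesselKLeading
  positivity

lemma incBesselK_div_leading_le {ν x t : ℝ} (hx : 0 < x) (ht : 0 < t)
    (hν : |ν| < x * sinh t) :
    incBesselK ν x t / incBesselKLeading ν x t ≤ (1 - |ν| / (x * sinh t))⁻¹ := by
  have hc : x * sinh t - |ν| ≠ 0 := (sub_pos.2 hν).ne'
  rw [div_le_iff₀ (incBesselKLeading_pos ν hx ht)]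
  refine (incBesselK_le hx.le hν).trans_eq ?_
  unfold incBesselKLeading
  field_simp

lemma le_incBesselK_div_leading {ν x t δ : ℝ} (hx : 0 < x) (ht : 0 < t) (hδ : 0 < δ)
    (hν : |ν| < x * sinh t) :
    sinh t / sinh (t + δ) * (1 - exp (-x * (cosh (t + δ) - cosh t))) ≤
      incBesselK ν x t / incBesselKLeading ν x t := by
  have hsδ : 0 < sinh (t + δ) := sinh_pos_iff.2 (by linarith)
  have hexp :
      exp (-x * cosh (t + δ)) = exp (-x * cosh t) * exp (-x * (cosh (t + δ) - cosh t)) := by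
    rw [← exp_add]; ring_nf
  rw [le_div_iff₀ (incBesselKLeading_pos ν hx ht)]
  refine le_trans (le_of_eq ?_) (le_incBesselK hx.ne' ht.le hδ
    (integrableOn_exp_neg_mul_cosh_mul_cosh hx.le hν))
  unfold incBesselKLeading
  rw [hexp]
  field_simp

lemma eventually_incBesselK_div_leading_lt (ν : ℝ) {t a : ℝ} (ht : 0 < t) (ha : 1 < a) :
    ∀ᶠ x in atTop, incBesselK ν x t / incBesselKLeading ν x t < a := by
  have hs : 0 < sinh t := sinh_pos_iff.2 ht
  have hlim : Tendsto (fun x => (1 - |ν| / (x * sinh t))⁻¹) atTop (𝓝 1) := by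
    simpa using ((tendsto_const_nhds.div_atTop (tendsto_id.atTop_mul_const hs)).const_sub
      (1 : ℝ)).inv₀ (by norm_num)
  filter_upwards [hlim.eventually (gt_mem_nhds ha), eventually_gt_atTop 0,
    (tendsto_id.atTop_mul_const hs).eventually_gt_atTop |ν|] with x hlt hx hν
  exact (incBesselK_div_leading_le hx ht hν).trans_lt hlt

lemma eventually_lt_incBesselK_div_leading (ν : ℝ) {t a : ℝ} (ht : 0 < t) (ha : a < 1) :
    ∀ᶠ x in atTop, a < incBesselK ν x t / incBesselKLeading ν x t := by
  have hs : 0 < sinh t := sinh_pos_iff.2 ht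
  have hcont : Tendsto (fun δ => sinh t / sinh (t + δ)) (𝓝[>] 0) (𝓝 1) := by
    have : ContinuousAt (fun δ => sinh t / sinh (t + δ)) 0 :=
      continuousAt_const.div (by fun_prop) (by simpa using hs.ne')
    simpa [hs.ne'] using this.tendsto.mono_left nhdsWithin_le_nhds
  obtain ⟨δ, haδ, hδ⟩ := ((hcont.eventually (lt_mem_nhds ha)).and self_mem_nhdsWithin).exists
  have hgap : 0 < cosh (t + δ) - cosh t :=
    sub_pos.2 (cosh_lt_cosh.2 (by rw [abs_of_pos ht, abs_of_pos (by linarith)]; linarith))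
  have hlim : Tendsto (fun x => sinh t / sinh (t + δ) * (1 - exp (-x * (cosh (t + δ) - cosh t))))
      atTop (𝓝 (sinh t / sinh (t + δ))) := by
    have hdecay := tendsto_exp_atBot.comp (tendsto_neg_atTop_atBot.atBot_mul_const hgap)
    simpa using (hdecay.const_sub 1).const_mul (sinh t / sinh (t + δ))
  filter_upwards [hlim.eventually (lt_mem_nhds haδ), eventually_gt_atTop 0,
    (tendsto_id.atTop_mul_const hs).eventually_gt_atTop |ν|] with x hlt hx hν
  exact hlt.trans_le (le_incBesselK_div_leading hx ht hδ hν)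

theorem stmt_17 (ν t : ℝ) (ht : 0 < t) :
    Tendsto (fun x : ℝ =>
        ((1/2) * ∫ τ in Set.Ioi t, Real.exp (-x * Real.cosh τ) * Real.cosh (ν * τ)) /
          (Real.cosh (ν*t) * Real.exp (-x * Real.cosh t) / (2 * x * Real.sinh t)))
      atTop (nhds 1) :=
  tendsto_order.2 ⟨fun _ ha => eventually_lt_incBesselK_div_leading ν ht ha,
    fun _ ha => eventually_incBesselK_div_leading_lt ν ht ha⟩
end
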